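/- arXiv:1501.00652 — 3 statements merged into one kernel-verified Lean document; each statement's English description precedes it below -/
import Mathlib

section
/- Let β(z,z') be a real-bilinear complex-valued Hermitian form on a real vector space Z (meaning β(z',z) = conj(β(z,z'))), and let J : Z → Z be a real-linear operator with J² = −I such that β(Jz, Jz') = β(z,z') for all z, z'. Then β is nonnegative definite (Σ_{j,k} conj(c_j) c_k β(z_j, z_k) ≥ 0 for all finite families z_j ∈ Z, c_j ∈ ℂ) if and only if Re β(z,z) + Im β(z,Jz) ≥ 0 and Re β(z,z) − Im β(z,Jz) ≥ 0 for all z ∈ Z. -/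
/-- Lemma on complex structures: let `β` be a real-bilinear
complex-valued Hermitian form on a real vector space `Z`, invariant under a complex
structure `J` (`J² = -I`).  Then `β` is nonnegative definite for complex coefficients
iff `Re β(z,z) ± Im β(z,Jz) ≥ 0` for all `z`. -/
theorem stmt5 (Z : Type*) [AddCommGroup Z] [Module ℝ Z]
    (β : Z → Z → ℂ)
    (hadd1 : ∀ z z' w, β (z + z') w = β z w + β z' w)
    (hadd2 : ∀ z w w', β z (w + w') = β z w + β z w')
    (hsmul1 : ∀ (r : ℝ) z w, β (r • z) w = (r : ℂ) * β z w)
    (hsmul2 : ∀ (r : ℝ) z w, β z (r • w) = (r : ℂ) * β z w)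
    (hherm : ∀ z w, β w z = starRingEnd ℂ (β z w))
    (J : Z →ₗ[ℝ] Z) (hJ : ∀ z, J (J z) = -z)
    (hinv : ∀ z w, β (J z) (J w) = β z w) :
    (∀ (k : ℕ) (z : Fin k → Z) (c : Fin k → ℂ),
        0 ≤ (∑ j, ∑ l, starRingEnd ℂ (c j) * c l * β (z j) (z l)).re ∧
        (∑ j, ∑ l, starRingEnd ℂ (c j) * c l * β (z j) (z l)).im = 0) ↔
    (∀ z : Z, 0 ≤ (β z z).re + (β z (J z)).im ∧ 0 ≤ (β z z).re - (β z (J z)).im) := by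
  have hneg1 : ∀ z w, β (-z) w = -β z w := by
    intro z w; have := hsmul1 (-1) z w; simpa using this
  have h1 : ∀ z w, β (J z) w = -β z (J w) := by
    intro z w
    have h2 := hinv (J z) w
    rw [hJ, hneg1] at h2
    exact h2.symm
  -- diagonal facts
  have hdiag_im : ∀ v, (β v v).im = 0 := by
    intro v
    have := hherm v v
    have := congrArg Complex.im this
    simp at this
    linarith
  have hJdiag_re : ∀ v, (β v (J v)).re = 0 := by
    intro v
    have h2 := hherm v (J v)   -- β (J v) v = conj (β v (J v))
    rw [h1] at h2
    have := congrArg Complex.re h2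
    simp at this
    linarith
  -- bundled bilinear map
  let B : Z →ₗ[ℝ] Z →ₗ[ℝ] ℂ := LinearMap.mk₂ ℝ β hadd1
    (fun r m n => by rw [hsmul1, Complex.real_smul])
    hadd2 (fun r m n => by rw [hsmul2, Complex.real_smul])
  have hB : ∀ z w, B z w = β z w := fun _ _ => rfl
  have hsum1 : ∀ {k : ℕ} (f : Fin k → Z) (y : Z), β (∑ j, f j) y = ∑ j, β (f j) y := by
    intro k f y
    exact map_sum (B.flip y) f Finset.univ
  have hsum2 : ∀ {k : ℕ} (x : Z) (f : Fin k → Z), β x (∑ j, f j) = ∑ j, β x (f j) := by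
    intro k x f
    exact map_sum (B x) f Finset.univ
  constructor
  · intro h z
    have hA := (h 2 ![z, J z] ![1, -Complex.I]).1
    have hB := (h 2 ![z, J z] ![1, Complex.I]).1
    simp [Fin.sum_univ_two, hinv, h1, Complex.add_re, Complex.mul_re] at hA hB
    constructor <;> linarith
  · intro h k z c
    set a : Fin k → ℝ := fun j => (c j).re with ha
    set b : Fin k → ℝ := fun j => (c j).im with hb
    set wf : Fin k → Z := fun j => a j • z j + (-(b j)) • J (z j) with hwf
    set uf : Fin k → Z := fun j => a j • z j + (b j) • J (z j) with huf
    set w : Z := ∑ j, wf j with hw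
    set u : Z := ∑ j, uf j with hu
    have hJwf : ∀ j, J (wf j) = b j • z j + a j • J (z j) := by
      intro j; simp [hwf, map_add, map_smul, hJ, smul_neg]; abel
    have hJuf : ∀ j, J (uf j) = (-(b j)) • z j + a j • J (z j) := by
      intro j; simp [huf, map_add, map_smul, hJ, smul_neg]; abel
    have inner : ∀ j l,
        β (wf j) (wf l) + Complex.I * β (wf j) (J (wf l))
        + (β (uf j) (uf l) - Complex.I * β (uf j) (J (uf l)))
        = 2 * (starRingEnd ℂ (c j) * c l * β (z j) (z l)) := by
      intro j l
      have hc : ∀ m, c m = (a m : ℂ) + (b m) * Complex.I :=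
        fun m => (Complex.re_add_im (c m)).symm
      have hcc : starRingEnd ℂ (c j) = (a j : ℂ) - (b j) * Complex.I := by
        rw [hc j]; simp [map_add, map_mul, Complex.conj_I, Complex.conj_ofReal]; ring
      rw [hJwf, hJuf, hcc, hc l]
      simp only [hwf, huf, hadd1, hadd2, hsmul1, hsmul2, hinv, h1, hJ, hneg1]
      ring_nf
      simp [Complex.I_sq]
      ring
    have e1 : β w w = ∑ j, ∑ l, β (wf j) (wf l) := by
      rw [hw, hsum1]
      exact Finset.sum_congr rfl fun j _ => hsum2 _ _
    have e2 : β w (J w) = ∑ j, ∑ l, β (wf j) (J (wf l)) := by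
      rw [hw, map_sum J wf Finset.univ, hsum1]
      exact Finset.sum_congr rfl fun j _ => hsum2 _ _
    have e3 : β u u = ∑ j, ∑ l, β (uf j) (uf l) := by
      rw [hu, hsum1]
      exact Finset.sum_congr rfl fun j _ => hsum2 _ _
    have e4 : β u (J u) = ∑ j, ∑ l, β (uf j) (J (uf l)) := by
      rw [hu, map_sum J uf Finset.univ, hsum1]
      exact Finset.sum_congr rfl fun j _ => hsum2 _ _
    have key : 2 * (∑ j, ∑ l, starRingEnd ℂ (c j) * c l * β (z j) (z l))
        = β w w + Complex.I * β w (J w) + (β u u - Complex.I * β u (J u)) := by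
      have step1 : 2 * (∑ j, ∑ l, starRingEnd ℂ (c j) * c l * β (z j) (z l))
          = ∑ j, ∑ l, (β (wf j) (wf l) + Complex.I * β (wf j) (J (wf l))
            + (β (uf j) (uf l) - Complex.I * β (uf j) (J (uf l)))) := by
        rw [Finset.mul_sum]
        exact Finset.sum_congr rfl fun j _ => by
          rw [Finset.mul_sum]
          exact Finset.sum_congr rfl fun l _ => (inner j l).symm
      rw [step1]
      simp only [Finset.sum_add_distrib, Finset.sum_sub_distrib, ← Finset.mul_sum,
        ← e1, ← e2, ← e3, ← e4]
    have hre := congrArg Complex.re key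
    have him := congrArg Complex.im key
    simp only [Complex.add_re, Complex.sub_re, Complex.add_im, Complex.sub_im,
      Complex.mul_re, Complex.mul_im, Complex.I_re, Complex.I_im, Complex.re_ofNat,
      Complex.im_ofNat, hdiag_im, hJdiag_re] at hre him
    have hw2 := (h w).2
    have hu1 := (h u).1
    constructor
    · linarith
    · linarith
end

section
/- Let M be a positive semidefinite Hermitian matrix and K a complex matrix such that M ≥ K*K. Then K M⁻ K* ≤ I, where M⁻ denotes the Moore–Penrose generalized inverse of M. -/
open scoped ComplexOrder
open Matrix

/-- The Moore–Penrose pseudoinverse of a Hermitian matrix, via the spectral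
decomposition (note that in Lean `(0:ℝ)⁻¹ = 0`, so zero eigenvalues are sent to `0`). -/
noncomputable def hermPinv {n : ℕ} {M : Matrix (Fin n) (Fin n) ℂ} (hM : M.IsHermitian) :
    Matrix (Fin n) (Fin n) ℂ :=
  (hM.eigenvectorUnitary : Matrix (Fin n) (Fin n) ℂ) *
    Matrix.diagonal (fun i => ((hM.eigenvalues i)⁻¹ : ℂ)) *
    (star hM.eigenvectorUnitary : Matrix (Fin n) (Fin n) ℂ)

/-- The pseudoinverse of a PSD matrix is PSD. -/
lemma hermPinv_posSemidef {b : ℕ} {M : Matrix (Fin b) (Fin b) ℂ} (hM : M.PosSemidef) :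
    (hermPinv hM.1).PosSemidef := by
  unfold hermPinv
  rw [show (star hM.1.eigenvectorUnitary : Matrix (Fin b) (Fin b) ℂ)
      = (hM.1.eigenvectorUnitary : Matrix (Fin b) (Fin b) ℂ)ᴴ from rfl]
  apply Matrix.PosSemidef.mul_mul_conjTranspose_same
  rw [Matrix.posSemidef_diagonal_iff]
  intro i
  have : (0 : ℝ) ≤ (hM.1.eigenvalues i)⁻¹ := inv_nonneg.2 (hM.eigenvalues_nonneg i)
  exact_mod_cast this

/-- The key Moore–Penrose identity `M⁻ M M⁻ = M⁻`. -/
lemma hermPinv_mul_mul {b : ℕ} {M : Matrix (Fin b) (Fin b) ℂ} (hM : M.PosSemidef) :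
    hermPinv hM.1 * M * hermPinv hM.1 = hermPinv hM.1 := by
  have hU : (hM.1.eigenvectorUnitary : Matrix (Fin b) (Fin b) ℂ)ᴴ
      * (hM.1.eigenvectorUnitary : Matrix (Fin b) (Fin b) ℂ) = 1 :=
    (Matrix.mem_unitaryGroup_iff').mp hM.1.eigenvectorUnitary.2
  have hMeq : M = (hM.1.eigenvectorUnitary : Matrix (Fin b) (Fin b) ℂ) *
      Matrix.diagonal (fun i => ((hM.1.eigenvalues i) : ℂ)) *
      (hM.1.eigenvectorUnitary : Matrix (Fin b) (Fin b) ℂ)ᴴ := hM.1.spectral_theorem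
  have hstar : (star hM.1.eigenvectorUnitary : Matrix (Fin b) (Fin b) ℂ)
      = (hM.1.eigenvectorUnitary : Matrix (Fin b) (Fin b) ℂ)ᴴ := rfl
  unfold hermPinv
  rw [hstar]
  set μ := hM.1.eigenvalues with hμ
  set V := (hM.1.eigenvectorUnitary : Matrix (Fin b) (Fin b) ℂ) with hV
  clear_value μ V
  rw [hMeq]
  set Di := Matrix.diagonal (fun i => ((μ i)⁻¹ : ℂ))
  set Dc := Matrix.diagonal (fun i => ((μ i) : ℂ))
  calc V * Di * Vᴴ * (V * Dc * Vᴴ) * (V * Di * Vᴴ)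
      = V * (Di * ((Vᴴ * V) * (Dc * ((Vᴴ * V) * Di)))) * Vᴴ := by
        simp only [Matrix.mul_assoc]
    _ = V * (Di * Dc * Di) * Vᴴ := by rw [hU]; simp [Matrix.mul_assoc]
    _ = V * Di * Vᴴ := by
        rw [show Di * Dc * Di = Di from ?_]
        simp only [Di, Dc, Matrix.diagonal_mul_diagonal]
        have hx : ∀ x : ℂ, x⁻¹ * x * x⁻¹ = x⁻¹ := by
          intro x
          rcases eq_or_ne x 0 with h | h
          · simp [h]
          · field_simp
        exact congrArg Matrix.diagonal (funext fun i => hx _)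

/-- Lemma: if `M ⪰ K*K`, then `K M⁻ K* ⪯ I`, where `M⁻` is the
Moore–Penrose generalized inverse. -/
theorem stmt6 {a b : ℕ} (K : Matrix (Fin a) (Fin b) ℂ)
    (M : Matrix (Fin b) (Fin b) ℂ) (hM : M.PosSemidef)
    (hMK : (M - Kᴴ * K).PosSemidef) :
    ((1 : Matrix (Fin a) (Fin a) ℂ) - K * hermPinv hM.1 * Kᴴ).PosSemidef := by
  set P := hermPinv hM.1 with hPdef
  have hPsd : P.PosSemidef := hermPinv_posSemidef hM
  have hPMP : P * M * P = P := hermPinv_mul_mul hM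
  have hPH : Pᴴ = P := hPsd.1
  have hA : K * P * M * (P * Kᴴ) = K * P * Kᴴ := by
    have h : K * (P * M * P) * Kᴴ = K * P * Kᴴ := by rw [hPMP]
    simpa only [Matrix.mul_assoc] using h
  have hB : K * P * (Kᴴ * K) * (P * Kᴴ) = (K * P * Kᴴ) * (K * P * Kᴴ) := by
    simp only [Matrix.mul_assoc]
  have key : (1 : Matrix (Fin a) (Fin a) ℂ) - K * P * Kᴴ
      = ((1 : Matrix (Fin a) (Fin a) ℂ) - K * P * Kᴴ)ᴴ *
          ((1 : Matrix (Fin a) (Fin a) ℂ) - K * P * Kᴴ) +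
        (K * P) * (M - Kᴴ * K) * (K * P)ᴴ := by
    simp only [conjTranspose_sub, conjTranspose_one, conjTranspose_mul, hPH,
      conjTranspose_conjTranspose]
    rw [Matrix.mul_sub (K * P), Matrix.sub_mul _ _ (P * Kᴴ), hA, hB]
    simp only [Matrix.mul_sub, Matrix.sub_mul, Matrix.mul_one, Matrix.one_mul,
      Matrix.mul_assoc]
    abel
  rw [key]
  exact (Matrix.posSemidef_conjTranspose_mul_self _).add
    (hMK.mul_mul_conjTranspose_same (K * P))
end

section
/- Let K be a complex square matrix and μ a Hermitian matrix satisfying μ ≥ ½(I − K*K) and μ ≥ −½(I − K*K). Define |K₂|² = μ + ½(K*K + I). Then |K₂|² ≥ I and |K₂|² ≥ K*K; consequently, with K₁ = K |K₂|⁻¹ (using the inverse, which exists since |K₂|² ≥ I), one has K₁ K₁* ≤ I. -/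
/-!
Write `M = μ + ½(K*K + I)`. The two hypotheses say exactly `M - I ≥ 0` and `M - K*K ≥ 0`, so
`M` is positive definite and its square root `S` is invertible. Conjugating `M - K*K ≥ 0` by
`S⁻¹` gives `I - (K S⁻¹)* (K S⁻¹) ≥ 0`, i.e. `K S⁻¹` is a contraction, and then so is its
adjoint: `I - (K S⁻¹)(K S⁻¹)* ≥ 0`.
-/

open scoped ComplexOrder
open Matrix

/-- The square root of a positive semidefinite matrix, as defined in Mathlib (December 2024). -/
noncomputable def Matrix.PosSemidef.sqrt {n 𝕜 : Type*} [Fintype n] [DecidableEq n] [RCLike 𝕜]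
    {A : Matrix n n 𝕜} (hA : A.PosSemidef) : Matrix n n 𝕜 :=
  (hA.1.eigenvectorUnitary : Matrix n n 𝕜) *
    diagonal (((↑) : ℝ → 𝕜) ∘ (√·) ∘ hA.1.eigenvalues) *
    (star hA.1.eigenvectorUnitary : Matrix n n 𝕜)

namespace Matrix

variable {m n 𝕜 : Type*} [Fintype m] [Fintype n] [DecidableEq n] [RCLike 𝕜]

namespace PosSemidef

lemma posSemidef_sqrt {A : Matrix n n 𝕜} (hA : A.PosSemidef) : hA.sqrt.PosSemidef := by
  unfold PosSemidef.sqrt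
  rw [star_eq_conjTranspose]
  refine PosSemidef.mul_mul_conjTranspose_same ?_ _
  rw [posSemidef_diagonal_iff]
  intro i
  simpa only [Function.comp_apply, RCLike.ofReal_nonneg] using Real.sqrt_nonneg _

lemma sqrt_mul_self {A : Matrix n n 𝕜} (hA : A.PosSemidef) : hA.sqrt * hA.sqrt = A := by
  unfold PosSemidef.sqrt
  conv_rhs => rw [hA.1.spectral_theorem, Unitary.conjStarAlgAut_apply]
  have hU : star (hA.1.eigenvectorUnitary : Matrix n n 𝕜) * hA.1.eigenvectorUnitary = 1 :=
    Unitary.coe_star_mul_self _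
  simp only [← Matrix.mul_assoc]
  rw [Matrix.mul_assoc _ (star _ : Matrix n n 𝕜), hU, Matrix.mul_one,
    Matrix.mul_assoc _ (diagonal _) (diagonal _), diagonal_mul_diagonal]
  congr 3
  funext i
  simp only [Function.comp_apply, ← RCLike.ofReal_mul]
  rw [Real.mul_self_sqrt (hA.eigenvalues_nonneg i)]

lemma isUnit_det_sqrt {A : Matrix n n 𝕜} (hA : A.PosSemidef) (hdet : IsUnit A.det) :
    IsUnit hA.sqrt.det := by
  rw [← hA.sqrt_mul_self, det_mul] at hdet
  exact isUnit_of_mul_isUnit_left hdet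

end PosSemidef

/-- The two sides are the two Schur complements of the block matrix `[[1, Uᴴ], [U, 1]]`. -/
lemma posSemidef_one_sub_mul_conjTranspose_iff [DecidableEq m] (U : Matrix m n 𝕜) :
    (1 - U * Uᴴ).PosSemidef ↔ (1 - Uᴴ * U).PosSemidef := by
  let _ : Invertible (1 : Matrix n n 𝕜) := invertibleOne
  let _ : Invertible (1 : Matrix m m 𝕜) := invertibleOne
  have h₁₁ := PosDef.fromBlocks₁₁ (A := (1 : Matrix n n 𝕜)) Uᴴ 1 PosDef.one
  have h₂₂ := PosDef.fromBlocks₂₂ (1 : Matrix n n 𝕜) Uᴴ (D := (1 : Matrix m m 𝕜)) PosDef.one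
  simp only [inv_one, Matrix.mul_one, conjTranspose_conjTranspose] at h₁₁ h₂₂
  exact h₁₁.symm.trans h₂₂

lemma one_sub_conjTranspose_mul_mul_inv {S : Matrix n n 𝕜} (hS : S.IsHermitian)
    (hdet : IsUnit S.det) (K : Matrix m n 𝕜) :
    1 - (K * S⁻¹)ᴴ * (K * S⁻¹) = S⁻¹ * (S * S - Kᴴ * K) * S⁻¹ := by
  have hSinv : (S⁻¹)ᴴ = S⁻¹ := by rw [conjTranspose_nonsing_inv, hS.eq]
  rw [conjTranspose_mul, hSinv, Matrix.mul_sub, Matrix.sub_mul]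
  congr 1
  · rw [← Matrix.mul_assoc, nonsing_inv_mul S hdet, Matrix.one_mul, mul_nonsing_inv S hdet]
  · simp only [Matrix.mul_assoc]

lemma posSemidef_one_sub_mul_inv_sqrt [DecidableEq m] {M : Matrix n n 𝕜} (hM : M.PosSemidef)
    (hdet : IsUnit M.det) {K : Matrix m n 𝕜} (hMK : (M - Kᴴ * K).PosSemidef) :
    (1 - (K * hM.sqrt⁻¹) * (K * hM.sqrt⁻¹)ᴴ).PosSemidef := by
  have hS := hM.posSemidef_sqrt.isHermitian
  rw [posSemidef_one_sub_mul_conjTranspose_iff,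
    one_sub_conjTranspose_mul_mul_inv hS (hM.isUnit_det_sqrt hdet), hM.sqrt_mul_self]
  simpa only [conjTranspose_nonsing_inv, hS.eq] using hMK.mul_mul_conjTranspose_same hM.sqrt⁻¹

end Matrix

theorem stmt8_general {sA sB : ℕ} (K : Matrix (Fin sA) (Fin sB) ℂ)
    (μ : Matrix (Fin sB) (Fin sB) ℂ)
    (hge : (μ - (1 / 2 : ℂ) • ((1 : Matrix (Fin sB) (Fin sB) ℂ) - Kᴴ * K)).PosSemidef)
    (hle : (μ + (1 / 2 : ℂ) • ((1 : Matrix (Fin sB) (Fin sB) ℂ) - Kᴴ * K)).PosSemidef) :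
    ((μ + (1 / 2 : ℂ) • (Kᴴ * K + 1)) - 1).PosSemidef ∧
    ((μ + (1 / 2 : ℂ) • (Kᴴ * K + 1)) - Kᴴ * K).PosSemidef ∧
    ∀ hM : (μ + (1 / 2 : ℂ) • (Kᴴ * K + 1)).PosSemidef,
      ((1 : Matrix (Fin sA) (Fin sA) ℂ) -
        (K * hM.sqrt⁻¹) * (K * hM.sqrt⁻¹)ᴴ).PosSemidef := by
  set M := μ + (1 / 2 : ℂ) • (Kᴴ * K + 1)
  have hM1 : (M - 1).PosSemidef := by convert hge using 1; module
  have hMK : (M - Kᴴ * K).PosSemidef := by convert hle using 1; module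
  have hMpos : M.PosDef := by simpa using PosDef.posSemidef_add hM1 PosDef.one
  exact ⟨hM1, hMK, fun hM =>
    posSemidef_one_sub_mul_inv_sqrt hM (isUnit_iff_ne_zero.mpr hMpos.det_pos.ne') hMK⟩

/-- if `μ ≥ ±½(I - K*K)` (the complete positivity condition of a
gauge-covariant Gaussian channel), then `|K₂|² := μ + ½(K*K + I)` satisfies
`|K₂|² ≥ I` and `|K₂|² ≥ K*K`, and `K₁ = K |K₂|⁻¹` satisfies `K₁ K₁* ≤ I`. -/
theorem stmt8 {sA sB : ℕ} (K : Matrix (Fin sA) (Fin sB) ℂ)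
    (μ : Matrix (Fin sB) (Fin sB) ℂ) (hμ : μ.IsHermitian)
    (hge : (μ - (1 / 2 : ℂ) • ((1 : Matrix (Fin sB) (Fin sB) ℂ) - Kᴴ * K)).PosSemidef)
    (hle : (μ + (1 / 2 : ℂ) • ((1 : Matrix (Fin sB) (Fin sB) ℂ) - Kᴴ * K)).PosSemidef) :
    ((μ + (1 / 2 : ℂ) • (Kᴴ * K + 1)) - 1).PosSemidef ∧
    ((μ + (1 / 2 : ℂ) • (Kᴴ * K + 1)) - Kᴴ * K).PosSemidef ∧
    ∀ hM : (μ + (1 / 2 : ℂ) • (Kᴴ * K + 1)).PosSemidef,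
      ((1 : Matrix (Fin sA) (Fin sA) ℂ) -
        (K * hM.sqrt⁻¹) * (K * hM.sqrt⁻¹)ᴴ).PosSemidef :=
  stmt8_general K μ hge hle
end
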